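/- arXiv:1401.6962 — 2 statements merged into one kernel-verified Lean document; each statement's English description precedes it below -/
import Mathlib

section
/- Let Φ ∈ ℝ^{M×N} and S₁, S₂ positive semidefinite N×N. Then 2·rank(Φ(S₁+S₂)Φᵀ) − rank(ΦS₁Φᵀ) − rank(ΦS₂Φᵀ) ≤ 2·rank(S₁+S₂) − rank(S₁) − rank(S₂). That is, the number of non-overlapping dimensions after projection never exceeds the number of non-overlapping dimensions of the original subspaces. -/
/-!
For positive semidefinite `S`, the kernel of `Φ S Φᴴ` is the preimage of `ker S` under `Φᴴ`, and
`ker (S₁ + S₂) ⊆ ker Sᵢ`. Pulling back nested subspaces `K ⊆ K₁` along a linear map `g` cannot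
increase the gap of their dimensions: `dim g⁻¹K₁ - dim g⁻¹K ≤ dim K₁ - dim K`. By rank–nullity this
reads `rank (Φ (S₁ + S₂) Φᴴ) - rank (Φ Sᵢ Φᴴ) ≤ rank (S₁ + S₂) - rank Sᵢ` for `i = 1, 2`; add the two.
-/

open Module

namespace Submodule

variable {K U V : Type*} [Field K] [AddCommGroup U] [Module K U] [AddCommGroup V] [Module K V]

theorem finrank_comap_eq [FiniteDimensional K U] (g : U →ₗ[K] V) (P : Submodule K V) :
    finrank K (P.comap g) = finrank K (LinearMap.ker g) + finrank K ↥(LinearMap.range g ⊓ P) := by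
  have h := (g.domRestrict (P.comap g)).finrank_range_add_finrank_ker
  rw [LinearMap.range_domRestrict, map_comap_eq, LinearMap.ker_domRestrict,
    (comapSubtypeEquivOfLe (LinearMap.ker_le_comap g)).finrank_eq] at h
  omega

theorem finrank_inf_add_finrank_le_of_le [FiniteDimensional K V] {P₁ P₂ : Submodule K V}
    (hP : P₁ ≤ P₂) (R : Submodule K V) :
    finrank K ↥(R ⊓ P₂) + finrank K P₁ ≤ finrank K ↥(R ⊓ P₁) + finrank K P₂ := by
  have hinf : R ⊓ P₂ ⊓ P₁ = R ⊓ P₁ := by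
    rw [inf_assoc, inf_eq_right.mpr hP]
  have hsup : R ⊓ P₂ ⊔ P₁ ≤ P₂ := sup_le inf_le_right hP
  have h := finrank_sup_add_finrank_inf_eq (R ⊓ P₂) P₁
  rw [hinf] at h
  have := finrank_mono hsup
  omega

theorem finrank_comap_add_finrank_le_of_le [FiniteDimensional K U] [FiniteDimensional K V]
    (g : U →ₗ[K] V) {P₁ P₂ : Submodule K V} (hP : P₁ ≤ P₂) :
    finrank K (P₂.comap g) + finrank K P₁ ≤ finrank K (P₁.comap g) + finrank K P₂ := by
  have := finrank_inf_add_finrank_le_of_le hP (LinearMap.range g)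
  rw [finrank_comap_eq, finrank_comap_eq]
  omega

end Submodule

namespace Matrix

open scoped ComplexOrder

theorem rank_add_finrank_ker_mulVecLin {K m n : Type*} [Field K] [Fintype m] [Fintype n]
    (A : Matrix m n K) :
    A.rank + finrank K (LinearMap.ker A.mulVecLin) = Fintype.card n := by
  rw [rank, LinearMap.finrank_range_add_finrank_ker, finrank_fintype_fun_eq_card]

variable {𝕜 m n : Type*} [RCLike 𝕜] [Fintype m] [Fintype n]

theorem PosSemidef.ker_mulVecLin_add_le_left {S T : Matrix n n 𝕜} (hS : S.PosSemidef)
    (hT : T.PosSemidef) : LinearMap.ker (S + T).mulVecLin ≤ LinearMap.ker S.mulVecLin := by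
  intro x hx
  simp only [LinearMap.mem_ker, mulVecLin_apply, add_mulVec] at hx ⊢
  have hsum : star x ⬝ᵥ S *ᵥ x + star x ⬝ᵥ T *ᵥ x = 0 := by
    rw [← dotProduct_add, hx, dotProduct_zero]
  exact (hS.dotProduct_mulVec_zero_iff x).mp ((add_eq_zero_iff_of_nonneg
    (hS.dotProduct_mulVec_nonneg x) (hT.dotProduct_mulVec_nonneg x)).mp hsum).1

theorem PosSemidef.ker_mulVecLin_mul_mul_conjTranspose {S : Matrix n n 𝕜} (hS : S.PosSemidef)
    (Φ : Matrix m n 𝕜) :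
    LinearMap.ker (Φ * S * Φᴴ).mulVecLin = (LinearMap.ker S.mulVecLin).comap Φᴴ.mulVecLin := by
  ext y
  simp only [LinearMap.mem_ker, Submodule.mem_comap, mulVecLin_apply]
  constructor
  · intro hy
    rw [← hS.dotProduct_mulVec_zero_iff, star_mulVec, conjTranspose_conjTranspose,
      ← dotProduct_mulVec, mulVec_mulVec, mulVec_mulVec, hy, dotProduct_zero]
  · intro hy
    rw [← mulVec_mulVec, ← mulVec_mulVec, hy, mulVec_zero]

theorem PosSemidef.rank_mul_add_mul_conjTranspose_add_rank_le {S T : Matrix n n 𝕜}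
    (hS : S.PosSemidef) (hT : T.PosSemidef) (Φ : Matrix m n 𝕜) :
    (Φ * (S + T) * Φᴴ).rank + S.rank ≤ (S + T).rank + (Φ * S * Φᴴ).rank := by
  have hST := rank_add_finrank_ker_mulVecLin (Φ * (S + T) * Φᴴ)
  have hS' := rank_add_finrank_ker_mulVecLin (Φ * S * Φᴴ)
  rw [(hS.add hT).ker_mulVecLin_mul_mul_conjTranspose] at hST
  rw [hS.ker_mulVecLin_mul_mul_conjTranspose] at hS'
  have := Submodule.finrank_comap_add_finrank_le_of_le Φᴴ.mulVecLin
    (hS.ker_mulVecLin_add_le_left hT)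
  have := rank_add_finrank_ker_mulVecLin (S + T)
  have := rank_add_finrank_ker_mulVecLin S
  omega

end Matrix

open Matrix

theorem stmt_10 (M N : ℕ) (Φ : Matrix (Fin M) (Fin N) ℝ)
    (S₁ S₂ : Matrix (Fin N) (Fin N) ℝ)
    (h₁ : S₁.PosSemidef) (h₂ : S₂.PosSemidef) :
    (2 * (Φ * (S₁ + S₂) * Φᵀ).rank : ℤ) - (Φ * S₁ * Φᵀ).rank - (Φ * S₂ * Φᵀ).rank ≤
      (2 * (S₁ + S₂).rank : ℤ) - S₁.rank - S₂.rank := by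
  have h₁₂ := h₁.rank_mul_add_mul_conjTranspose_add_rank_le h₂ Φ
  have h₂₁ := h₂.rank_mul_add_mul_conjTranspose_add_rank_le h₁ Φ
  rw [add_comm S₂] at h₂₁
  rw [← conjTranspose_eq_transpose_of_trivial]
  omega
end

section
/- Let Φ be an M×N matrix whose rows consist of orthonormal vectors v₁,…,v_{n₁} and w₁,…,w_{n₂}, where {u's, v's} is an orthonormal basis of Null(S₁), {u's, w's} is an orthonormal basis of Null(S₂), and {u's} is an orthonormal basis of Null(S₁)∩Null(S₂), for PSD matrices S₁, S₂. Then rank(ΦS₁Φᵀ) = n₂, rank(ΦS₂Φᵀ) = n₁, and rank(Φ(S₁+S₂)Φᵀ) = n₁+n₂; consequently 2·rank(Φ(S₁+S₂)Φᵀ) − rank(ΦS₁Φᵀ) − rank(ΦS₂Φᵀ) = 2·rank(S₁+S₂) − rank(S₁) − rank(S₂), i.e., this design achieves the maximal number of non-overlapping dimensions. -/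
open Matrix Module

/-!
Write `V = Null(S₁)`, `W = Null(S₂)`, `A = span v`, `B = span w`; the rows of `Φ` span `A ⊔ B`.
Factoring a positive semidefinite `S = Rᵀ R` gives `rank (Φ S Φᵀ) = rank (R Φᵀ)` and
`Null(R) = Null(S)`, so `rank (Φ S Φᵀ) = dim (A ⊔ B) - dim (Null(S) ⊓ (A ⊔ B))`. Since `A ≤ V`
and `B ≤ W` both meet `V ⊓ W` trivially, the modular law gives `V ⊓ (A ⊔ B) = A`,
`W ⊓ (A ⊔ B) = B` and `(V ⊓ W) ⊓ (A ⊔ B) = ⊥`, while `Null(S₁ + S₂) = V ⊓ W`.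
-/

section ModularLattice

variable {α : Type*} [Lattice α] [OrderBot α] {A B V W : α}

theorem disjoint_of_le_of_disjoint_inf (hA : A ≤ V) (hB : B ≤ W) (hAVW : Disjoint (V ⊓ W) A) :
    Disjoint A B :=
  disjoint_iff_inf_le.mpr <| (le_inf (inf_le_inf hA hB) inf_le_left).trans hAVW.le_bot

variable [IsModularLattice α]

theorem inf_sup_eq_left_of_disjoint_inf (hA : A ≤ V) (hB : B ≤ W) (hBVW : Disjoint (V ⊓ W) B) :
    V ⊓ (A ⊔ B) = A := by
  have hBV : B ⊓ V = ⊥ :=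
    le_bot_iff.mp <| (le_inf (le_inf inf_le_right (inf_le_left.trans hB)) inf_le_left).trans
      hBVW.le_bot
  rw [inf_comm, sup_inf_assoc_of_le B hA, hBV, sup_bot_eq]

theorem disjoint_inf_sup_of_disjoint_inf (hA : A ≤ V) (hB : B ≤ W)
    (hAVW : Disjoint (V ⊓ W) A) (hBVW : Disjoint (V ⊓ W) B) : Disjoint (V ⊓ W) (A ⊔ B) := by
  rw [disjoint_iff, inf_right_comm, inf_sup_eq_left_of_disjoint_inf hA hB hBVW,
    ← inf_eq_left.mpr hA, inf_assoc, ← disjoint_iff]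
  exact hAVW.symm

end ModularLattice

theorem Submodule.finrank_map_add_finrank_inf_ker {K M M₂ : Type*} [DivisionRing K]
    [AddCommGroup M] [Module K M] [AddCommGroup M₂] [Module K M₂]
    (f : M →ₗ[K] M₂) (p : Submodule K M) [FiniteDimensional K p] :
    finrank K (p.map f) + finrank K ↥(LinearMap.ker f ⊓ p) = finrank K p := by
  have h := LinearMap.finrank_range_add_finrank_ker (f.domRestrict p)
  rwa [LinearMap.range_domRestrict, LinearMap.ker_domRestrict, ← finrank_map_subtype_eq,
    map_comap_subtype, inf_comm] at h

theorem Matrix.rank_add_finrank_ker_mulVecLin_s19 {K m n : Type*} [Field K] [Fintype n]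
    (A : Matrix m n K) : A.rank + finrank K (LinearMap.ker A.mulVecLin) = Fintype.card n := by
  rw [Matrix.rank, LinearMap.finrank_range_add_finrank_ker, finrank_fintype_fun_eq_card]

theorem linearIndependent_of_dotProduct_eq_ite {R ι n : Type*} [CommRing R] [Fintype n]
    [DecidableEq ι] (x : ι → n → R) (h : ∀ a b, x a ⬝ᵥ x b = if a = b then 1 else 0) :
    LinearIndependent R x := by
  rw [linearIndependent_iff']
  intro s g hg i hi
  have hgi := congrArg (x i ⬝ᵥ ·) hg
  simpa [dotProduct_sum, dotProduct_smul, h, hi] using hgi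

open ComplexOrder in
theorem Matrix.PosSemidef.ker_mulVecLin_add {𝕜 n : Type*} [RCLike 𝕜] [Fintype n]
    {S₁ S₂ : Matrix n n 𝕜} (h₁ : S₁.PosSemidef) (h₂ : S₂.PosSemidef) :
    LinearMap.ker (S₁ + S₂).mulVecLin =
      LinearMap.ker S₁.mulVecLin ⊓ LinearMap.ker S₂.mulVecLin := by
  ext x
  simp only [LinearMap.mem_ker, Submodule.mem_inf, mulVecLin_apply, add_mulVec]
  refine ⟨fun h => ?_, fun ⟨h₁x, h₂x⟩ => by rw [h₁x, h₂x, add_zero]⟩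
  have hsum : star x ⬝ᵥ S₁ *ᵥ x + star x ⬝ᵥ S₂ *ᵥ x = 0 := by
    rw [← dotProduct_add, h, dotProduct_zero]
  obtain ⟨hq₁, hq₂⟩ := (add_eq_zero_iff_of_nonneg (h₁.dotProduct_mulVec_nonneg x)
    (h₂.dotProduct_mulVec_nonneg x)).mp hsum
  exact ⟨(h₁.dotProduct_mulVec_zero_iff x).mp hq₁, (h₂.dotProduct_mulVec_zero_iff x).mp hq₂⟩

theorem Matrix.PosSemidef.exists_eq_transpose_mul_self {n : Type*} [Fintype n]
    {S : Matrix n n ℝ} (hS : S.PosSemidef) : ∃ R : Matrix n n ℝ, S = Rᵀ * R := by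
  classical
  open scoped MatrixOrder in
  obtain ⟨R, rfl⟩ := CStarAlgebra.nonneg_iff_eq_star_mul_self.mp hS.nonneg
  exact ⟨R, by rw [star_eq_conjTranspose, conjTranspose_eq_transpose_of_trivial]⟩

theorem Matrix.PosSemidef.rank_mul_mul_transpose_add_finrank_inf {ι n : Type*} [Fintype ι]
    [Fintype n] {S : Matrix n n ℝ} (hS : S.PosSemidef) (Φ : Matrix ι n ℝ) :
    (Φ * S * Φᵀ).rank + finrank ℝ ↥(LinearMap.ker S.mulVecLin ⊓ Submodule.span ℝ (Set.range Φ)) =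
      finrank ℝ (Submodule.span ℝ (Set.range Φ)) := by
  obtain ⟨R, rfl⟩ := hS.exists_eq_transpose_mul_self
  have hfactor : Φ * (Rᵀ * R) * Φᵀ = (R * Φᵀ)ᵀ * (R * Φᵀ) := by
    simp only [transpose_mul, transpose_transpose, Matrix.mul_assoc]
  rw [hfactor, rank_transpose_mul_self, ker_mulVecLin_transpose_mul_self, Matrix.rank,
    mulVecLin_mul, LinearMap.range_comp, range_mulVecLin]
  exact Submodule.finrank_map_add_finrank_inf_ker _ _

theorem rank_mul_mul_transpose_of_span_range_eq_sup {ι n : Type*} [Fintype ι] [Fintype n]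
    {S₁ S₂ : Matrix n n ℝ} {A B : Submodule ℝ (n → ℝ)} {Φ : Matrix ι n ℝ}
    (h₁ : S₁.PosSemidef) (h₂ : S₂.PosSemidef)
    (hA : A ≤ LinearMap.ker S₁.mulVecLin) (hB : B ≤ LinearMap.ker S₂.mulVecLin)
    (hAdisj : Disjoint (LinearMap.ker S₁.mulVecLin ⊓ LinearMap.ker S₂.mulVecLin) A)
    (hBdisj : Disjoint (LinearMap.ker S₁.mulVecLin ⊓ LinearMap.ker S₂.mulVecLin) B)
    (hΦ : Submodule.span ℝ (Set.range Φ) = A ⊔ B) :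
    (Φ * S₁ * Φᵀ).rank = finrank ℝ B ∧ (Φ * S₂ * Φᵀ).rank = finrank ℝ A ∧
      (Φ * (S₁ + S₂) * Φᵀ).rank = finrank ℝ A + finrank ℝ B := by
  have hspan : finrank ℝ (Submodule.span ℝ (Set.range Φ)) = finrank ℝ A + finrank ℝ B := by
    have h := Submodule.finrank_sup_add_finrank_inf_eq A B
    rwa [disjoint_iff.mp (disjoint_of_le_of_disjoint_inf hA hB hAdisj), finrank_bot, add_zero,
      ← hΦ] at h
  have hS₁ := h₁.rank_mul_mul_transpose_add_finrank_inf Φ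
  have hS₂ := h₂.rank_mul_mul_transpose_add_finrank_inf Φ
  have hS₁₂ := (h₁.add h₂).rank_mul_mul_transpose_add_finrank_inf Φ
  rw [hspan, hΦ, inf_sup_eq_left_of_disjoint_inf hA hB hBdisj] at hS₁
  have hAdisj' : Disjoint (LinearMap.ker S₂.mulVecLin ⊓ LinearMap.ker S₁.mulVecLin) A := by
    rwa [inf_comm]
  rw [hspan, hΦ, sup_comm, inf_sup_eq_left_of_disjoint_inf hB hA hAdisj'] at hS₂
  rw [hspan, hΦ, h₁.ker_mulVecLin_add h₂, disjoint_iff.mp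
    (disjoint_inf_sup_of_disjoint_inf hA hB hAdisj hBdisj), finrank_bot] at hS₁₂
  omega

theorem stmt_19 (N m n₁ n₂ : ℕ) (S₁ S₂ : Matrix (Fin N) (Fin N) ℝ)
    (h₁ : S₁.PosSemidef) (h₂ : S₂.PosSemidef)
    (u : Fin m → (Fin N → ℝ)) (v : Fin n₁ → (Fin N → ℝ)) (w : Fin n₂ → (Fin N → ℝ))
    (horth₁ : ∀ a b : Fin m ⊕ Fin n₁,
      Sum.elim u v a ⬝ᵥ Sum.elim u v b = if a = b then (1 : ℝ) else 0)
    (hspan₁ : Submodule.span ℝ (Set.range (Sum.elim u v)) = LinearMap.ker S₁.mulVecLin)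
    (horth₂ : ∀ a b : Fin m ⊕ Fin n₂,
      Sum.elim u w a ⬝ᵥ Sum.elim u w b = if a = b then (1 : ℝ) else 0)
    (hspan₂ : Submodule.span ℝ (Set.range (Sum.elim u w)) = LinearMap.ker S₂.mulVecLin)
    (hspanu : Submodule.span ℝ (Set.range u) =
      LinearMap.ker S₁.mulVecLin ⊓ LinearMap.ker S₂.mulVecLin)
    (Φ : Matrix (Fin n₁ ⊕ Fin n₂) (Fin N) ℝ)
    (hΦ : Φ = Matrix.of (Sum.elim v w)) :
    (Φ * S₁ * Φᵀ).rank = n₂ ∧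
    (Φ * S₂ * Φᵀ).rank = n₁ ∧
    (Φ * (S₁ + S₂) * Φᵀ).rank = n₁ + n₂ ∧
    (2 * (Φ * (S₁ + S₂) * Φᵀ).rank : ℤ) - (Φ * S₁ * Φᵀ).rank - (Φ * S₂ * Φᵀ).rank =
      (2 * (S₁ + S₂).rank : ℤ) - S₁.rank - S₂.rank := by
  classical
  have hli₁ := linearIndependent_of_dotProduct_eq_ite _ horth₁
  have hli₂ := linearIndependent_of_dotProduct_eq_ite _ horth₂
  obtain ⟨hu, hv, hUV⟩ := linearIndependent_sum.mp hli₁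
  obtain ⟨-, hw, hUW⟩ := linearIndependent_sum.mp hli₂
  simp only [Sum.elim_comp_inl, Sum.elim_comp_inr] at hu hv hw hUV hUW
  have hker₁ : finrank ℝ (LinearMap.ker S₁.mulVecLin) = m + n₁ := by
    rw [← hspan₁, finrank_span_eq_card hli₁, Fintype.card_sum, Fintype.card_fin, Fintype.card_fin]
  have hker₂ : finrank ℝ (LinearMap.ker S₂.mulVecLin) = m + n₂ := by
    rw [← hspan₂, finrank_span_eq_card hli₂, Fintype.card_sum, Fintype.card_fin, Fintype.card_fin]
  have hker₁₂ : finrank ℝ (LinearMap.ker (S₁ + S₂).mulVecLin) = m := by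
    rw [h₁.ker_mulVecLin_add h₂, ← hspanu, finrank_span_eq_card hu, Fintype.card_fin]
  rw [Set.Sum.elim_range, Submodule.span_union] at hspan₁ hspan₂
  obtain ⟨e₁, e₂, e₁₂⟩ := rank_mul_mul_transpose_of_span_range_eq_sup (Φ := Φ) h₁ h₂
    (hspan₁ ▸ le_sup_right) (hspan₂ ▸ le_sup_right) (hspanu ▸ hUV) (hspanu ▸ hUW)
    (by rw [hΦ, ← Submodule.span_union, ← Set.Sum.elim_range]; rfl)
  simp only [finrank_span_eq_card hv, finrank_span_eq_card hw, Fintype.card_fin] at e₁ e₂ e₁₂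
  have r₁ := S₁.rank_add_finrank_ker_mulVecLin_s19
  have r₂ := S₂.rank_add_finrank_ker_mulVecLin_s19
  have r₁₂ := (S₁ + S₂).rank_add_finrank_ker_mulVecLin_s19
  refine ⟨e₁, e₂, e₁₂, ?_⟩
  omega
end
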